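/- arXiv:1404.4671 — 3 statements merged into one kernel-verified Lean document; each statement's English description precedes it below -/
import Mathlib

section
/- For any word Q in the simple reflections of a Coxeter group W and any w ∈ W, w ≤ Dem(Q) in Bruhat order if and only if Q contains a subword that is a reduced expression for w. -/
open List

variable {B : Type*} [DecidableEq B] {W : Type*} [Group W] {M : CoxeterMatrix B}

/-- One step of the Demazure product recursion: multiply by the simple reflection `s i`
if this increases length, otherwise do nothing. -/
noncomputable def demStep (cs : CoxeterSystem M W) (w : W) (i : B) : W :=
  if cs.length w < cs.length (w * cs.simple i) then w * cs.simple i else w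

/-- The Demazure product of a word `Q` in the simple reflections. -/
noncomputable def dem (cs : CoxeterSystem M W) (Q : List B) : W :=
  Q.foldl (demStep cs) 1

/-- `l` is a reduced word for `w`. -/
def IsRWordFor (cs : CoxeterSystem M W) (l : List B) (w : W) : Prop :=
  cs.wordProd l = w ∧ l.length = cs.length w

/-- Bruhat order via the subword property: `u ≤ v` iff some reduced word for `v`
contains a sublist which is a reduced word for `u`. -/
def BruhatLE (cs : CoxeterSystem M W) (u v : W) : Prop :=
  ∃ l : List B, IsRWordFor cs l v ∧ ∃ l' : List B, l'.Sublist l ∧ IsRWordFor cs l' u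

/-- The word obtained from `Q` by deleting the letters at positions in `F`
(the ordered complement `Q∖F`). -/
def cword (Q : List B) (F : Finset (Fin Q.length)) : List B :=
  ((List.finRange Q.length).filter (fun i => i ∉ F)).map Q.get

/-- `F` is a facet of the subword complex `Δ(Q,w)`: the ordered product of the letters of
`Q` at positions outside `F` is a reduced expression for `w`. -/
def IsFacet (cs : CoxeterSystem M W) (Q : List B) (w : W) (F : Finset (Fin Q.length)) : Prop :=
  IsRWordFor cs (cword Q F) w

/-- `J` is a face of the subword complex `Δ(Q,w)`: the complement `Q∖J` contains a reduced
expression for `w` as a subword. -/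
def IsFace (cs : CoxeterSystem M W) (Q : List B) (w : W) (J : Finset (Fin Q.length)) : Prop :=
  ∃ l : List B, l.Sublist (cword Q J) ∧ IsRWordFor cs l w

/-!
Bruhat order is used in its chain form: `u ≤ v` when `v` is reached from `u` by left
multiplications by reflections, each increasing length. The key input is the strong exchange
property: if `ℓ (t * w) < ℓ w` for a reflection `t`, then `t` occurs in the left inversion
sequence of every word for `w`. It comes from the reflection cocycle `η w t : ZMod 2`
(`reflCocycle`), the parity of the number of occurrences of `t` in that sequence, which does not
depend on the word because it is read off a representation of `W` on `W × ZMod 2`; `η t t = 1`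
and the cocycle identity give `η w t = 1` whenever `ℓ (t * w) < ℓ w`.

Strong exchange shows that a chain `u ≤ v` survives in every reduced word of `v` as a reduced
subword. Conversely, products of subwords of a reduced word of `v` lie below `v`; this is proved
by induction on `ℓ v`, together with the lifting property (`u ≤ v`, `u < u s`, `v s < v` imply
`u s ≤ v`). For the Demazure product, `Dem Q` has a reduced word that is a subword of `Q`, and
the product of any subword of `Q` lies below `Dem Q`, since each Demazure step from `v` either
keeps `v` or moves up to `v s`.
-/

theorem List.sublist_append_singleton_iff {α : Type*} {l l' : List α} {a : α} :
    l <+ l' ++ [a] ↔ l <+ l' ∨ ∃ r, l = r ++ [a] ∧ r <+ l' := by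
  rw [sublist_append_iff]
  constructor
  · rintro ⟨r, b, rfl, hr, hb⟩
    rcases sublist_singleton.1 hb with rfl | rfl
    · exact .inl (by simpa using hr)
    · exact .inr ⟨r, rfl, hr⟩
  · rintro (h | ⟨r, rfl, hr⟩)
    · exact ⟨l, [], by simp, h, nil_sublist _⟩
    · exact ⟨r, [a], rfl, hr, Sublist.refl _⟩

namespace CoxeterSystem

section

omit [DecidableEq B]

variable (cs : CoxeterSystem M W)

local prefix:100 "s" => cs.simple
local prefix:100 "π" => cs.wordProd
local prefix:100 "ℓ" => cs.length
local prefix:100 "lis " => cs.leftInvSeq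

theorem prod_map_alternatingWord {G : Type*} [Monoid G] (f : B → G) (i j : B) (p : ℕ) :
    ((alternatingWord i j (2 * p)).map f).prod = (f i * f j) ^ p := by
  induction p with
  | zero => simp [alternatingWord]
  | succ p ih =>
    rw [show 2 * (p + 1) = 2 * p + 1 + 1 by ring, alternatingWord_succ', alternatingWord_succ']
    simp [ih, pow_succ', mul_assoc]

theorem count_map_conj_simple [DecidableEq W] (i : B) (L : List W) (t : W) :
    (L.map (MulAut.conj (s i))).count t = L.count (s i * t * s i) := by
  rw [← count_map_of_injective L _ (MulAut.conj (s i)).injective]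
  congr 1
  simp [mul_assoc, cs.simple_mul_simple_cancel_left]

section ReflectionRepresentation

variable [DecidableEq W]

noncomputable def reflFlip (i : B) : Equiv.Perm (W × ZMod 2) :=
  Function.Involutive.toPerm (fun p => (s i * p.1 * s i, p.2 + if p.1 = s i then 1 else 0)) <| by
    rintro ⟨t, a⟩
    by_cases ht : t = s i
    · simp [ht, cs.simple_mul_simple_self, add_assoc, ZModModule.add_self]
    · simp [ht, mul_assoc, cs.simple_mul_simple_cancel_left, mul_eq_one_iff_eq_inv, cs.inv_simple]

theorem reflFlip_apply (i : B) (t : W) (a : ZMod 2) :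
    cs.reflFlip i (t, a) = (s i * t * s i, a + if t = s i then 1 else 0) := rfl

theorem reflFlip_inv (i : B) : (cs.reflFlip i)⁻¹ = cs.reflFlip i :=
  Function.Involutive.toPerm_symm _

theorem inv_prod_map_reflFlip_apply (ω : List B) (t : W) (a : ZMod 2) :
    ((ω.map cs.reflFlip).prod)⁻¹ (t, a) = ((π ω)⁻¹ * t * π ω, a + (lis ω).count t) := by
  induction ω generalizing t a with
  | nil => simp
  | cons i ω ih =>
    rw [map_cons, prod_cons, mul_inv_rev, Equiv.Perm.mul_apply, reflFlip_inv, reflFlip_apply, ih]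
    simp only [leftInvSeq, count_cons, count_map_conj_simple, wordProd_cons, mul_inv_rev,
      inv_simple, Prod.mk.injEq, mul_assoc, true_and]
    by_cases ht : t = s i
    · simp [ht]
      ring
    · simp [ht, Ne.symm ht]

/-- The `k`-th entry of this sequence is `s i * (s j * s i) ^ k`, so it is periodic with period
`M i j` and every element occurs an even number of times. -/
theorem count_leftInvSeq_alternatingWord (i j : B) (t : W) :
    ((lis (alternatingWord i j (2 * M i j))).count t : ZMod 2) = 0 := by
  set L := lis (alternatingWord i j (2 * M i j))
  have hL : L.length = 2 * M i j := by simp [L]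
  have hperiodic : L.drop (M i j) = L.take (M i j) := by
    refine ext_getElem (by simp [hL]; omega) fun k h₁ h₂ => ?_
    simp only [length_drop, length_take, hL] at h₁ h₂
    simp only [getElem_drop, getElem_take, L]
    rw [getElem_leftInvSeq_alternatingWord cs i j _ _ (by omega),
      getElem_leftInvSeq_alternatingWord cs i j _ _ (by omega), prod_alternatingWord_eq_mul_pow,
      prod_alternatingWord_eq_mul_pow, show (2 * (M i j + k) + 1) / 2 = k + M i j by omega,
      show (2 * k + 1) / 2 = k by omega, pow_add, simple_mul_simple_pow', mul_one]
    simp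
  rw [← take_append_drop (M i j) L, count_append, hperiodic, ← two_mul, Nat.cast_mul]
  exact zero_mul _

theorem isLiftable_reflFlip : M.IsLiftable cs.reflFlip := by
  intro i j
  rw [← prod_map_alternatingWord, ← inv_eq_one]
  ext ⟨t, a⟩ : 1
  rw [inv_prod_map_reflFlip_apply, count_leftInvSeq_alternatingWord, prod_alternatingWord_eq_mul_pow]
  simp [cs.simple_mul_simple_pow]

noncomputable def reflRep : W →* Equiv.Perm (W × ZMod 2) :=
  cs.lift ⟨cs.reflFlip, cs.isLiftable_reflFlip⟩

theorem reflRep_wordProd (ω : List B) : cs.reflRep (π ω) = (ω.map cs.reflFlip).prod := by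
  rw [wordProd, map_list_prod, map_map]
  congr 2
  ext1 i
  exact cs.lift_apply_simple _ i

noncomputable def reflCocycle (w t : W) : ZMod 2 :=
  ((cs.reflRep w)⁻¹ (t, 0)).2

theorem reflCocycle_wordProd (ω : List B) (t : W) :
    cs.reflCocycle (π ω) t = (lis ω).count t := by
  simp [reflCocycle, reflRep_wordProd, inv_prod_map_reflFlip_apply]

theorem reflRep_inv_apply (w t : W) (a : ZMod 2) :
    (cs.reflRep w)⁻¹ (t, a) = (w⁻¹ * t * w, a + cs.reflCocycle w t) := by
  obtain ⟨ω, rfl⟩ := cs.wordProd_surjective w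
  rw [reflCocycle_wordProd, reflRep_wordProd, inv_prod_map_reflFlip_apply]

theorem reflCocycle_mul (u v t : W) :
    cs.reflCocycle (u * v) t = cs.reflCocycle u t + cs.reflCocycle v (u⁻¹ * t * u) := by
  calc cs.reflCocycle (u * v) t = ((cs.reflRep v)⁻¹ ((cs.reflRep u)⁻¹ (t, 0))).2 := by
        rw [reflCocycle, map_mul, mul_inv_rev, Equiv.Perm.mul_apply]
    _ = _ := by rw [reflRep_inv_apply, reflRep_inv_apply, zero_add]

theorem reflCocycle_one (t : W) : cs.reflCocycle 1 t = 0 := by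
  simp [reflCocycle]

theorem reflCocycle_simple_self (i : B) : cs.reflCocycle (s i) (s i) = 1 := by
  rw [← wordProd_singleton, reflCocycle_wordProd]
  simp [leftInvSeq]

theorem reflCocycle_self {t : W} (ht : cs.IsReflection t) : cs.reflCocycle t t = 1 := by
  -- expand `η (v * s i * v⁻¹)` by the cocycle identity and compare with `η (v * v⁻¹) = 0`
  obtain ⟨v, i, rfl⟩ := ht
  have h₁ := cs.reflCocycle_mul (v * s i) v⁻¹ (v * s i * v⁻¹)
  have h₂ := cs.reflCocycle_mul v (s i) (v * s i * v⁻¹)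
  have h₃ := cs.reflCocycle_mul v v⁻¹ (v * s i * v⁻¹)
  have hconj : v⁻¹ * (v * s i * v⁻¹) * v = s i := by group
  rw [show (v * s i)⁻¹ * (v * s i * v⁻¹) * (v * s i) = s i by group] at h₁
  rw [hconj, reflCocycle_simple_self] at h₂
  rw [hconj, mul_inv_cancel, reflCocycle_one] at h₃
  rw [h₁, h₂]
  linear_combination -h₃

theorem mem_leftInvSeq_of_reflCocycle_ne_zero {ω : List B} {t : W}
    (h : cs.reflCocycle (π ω) t ≠ 0) : t ∈ lis ω := by
  rw [reflCocycle_wordProd] at h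
  exact count_pos_iff.mp (Nat.pos_of_ne_zero fun h₀ => h (by rw [h₀, Nat.cast_zero]))

theorem reflCocycle_eq_one_of_length_mul_lt {w t : W} (ht : cs.IsReflection t)
    (h : ℓ (t * w) < ℓ w) : cs.reflCocycle w t = 1 := by
  obtain ⟨ω, hω, hωw⟩ := cs.exists_isReduced (t * w)
  have hnot : t ∉ lis ω := fun hmem => by
    have := (cs.isLeftInversion_of_mem_leftInvSeq hω hmem).2
    rw [← hωw, ← mul_assoc, ht.mul_self, one_mul] at this
    omega
  have h₀ : cs.reflCocycle (t * w) t = 0 := by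
    rw [hωw, reflCocycle_wordProd, count_eq_zero.2 hnot, Nat.cast_zero]
  calc cs.reflCocycle w t = cs.reflCocycle (t * (t * w)) t := by
        rw [← mul_assoc, ht.mul_self, one_mul]
    _ = cs.reflCocycle t t + cs.reflCocycle (t * w) (t⁻¹ * t * t) := cs.reflCocycle_mul _ _ _
    _ = 1 := by rw [reflCocycle_self cs ht, inv_mul_cancel, one_mul, h₀, add_zero]

end ReflectionRepresentation

theorem mem_leftInvSeq_of_length_mul_lt (ω : List B) {t : W} (ht : cs.IsReflection t)
    (h : ℓ (t * π ω) < ℓ (π ω)) : t ∈ lis ω := by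
  classical
  exact cs.mem_leftInvSeq_of_reflCocycle_ne_zero <| by
    rw [cs.reflCocycle_eq_one_of_length_mul_lt ht h]
    exact one_ne_zero

theorem exists_wordProd_eraseIdx_eq_mul (ω : List B) {t : W} (ht : cs.IsReflection t)
    (h : ℓ (t * π ω) < ℓ (π ω)) : ∃ j < ω.length, π (ω.eraseIdx j) = t * π ω := by
  obtain ⟨j, hj, rfl⟩ := mem_iff_getElem.mp (cs.mem_leftInvSeq_of_length_mul_lt ω ht h)
  refine ⟨j, by simpa using hj, ?_⟩
  rw [← getD_leftInvSeq_mul_wordProd, getD_eq_getElem]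

theorem isReduced_append_singleton_iff (ω : List B) (i : B) :
    cs.IsReduced (ω ++ [i]) ↔ cs.IsReduced ω ∧ ℓ (π ω) < ℓ (π ω * s i) := by
  have := cs.length_mul_simple (π ω) i
  have := cs.length_wordProd_le ω
  simp only [IsReduced, wordProd_append, wordProd_singleton, length_append, length_singleton]
  omega

theorem exists_reduced_sublist (ω : List B) :
    ∃ ω', ω' <+ ω ∧ π ω' = π ω ∧ cs.IsReduced ω' := by
  induction ω using List.reverseRecOn with
  | nil => exact ⟨[], Sublist.refl _, rfl, by simp [IsReduced]⟩
  | append_singleton ω i ih =>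
    obtain ⟨ρ, hρω, hρ, hρred⟩ := ih
    have hπ : π (ω ++ [i]) = π ρ * s i := by rw [wordProd_append, wordProd_singleton, hρ]
    rcases lt_or_gt_of_ne (cs.length_mul_simple_ne (π ρ) i) with hdesc | hasc
    · have hconj : π ρ * s i * (π ρ)⁻¹ * π ρ = π ρ * s i := by group
      obtain ⟨j, hj, hjρ⟩ := cs.exists_wordProd_eraseIdx_eq_mul ρ ⟨π ρ, i, rfl⟩ (by rwa [hconj])
      refine ⟨ρ.eraseIdx j, (eraseIdx_sublist ρ j).trans (hρω.trans (sublist_append_left _ _)),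
        by rw [hjρ, hconj, hπ], ?_⟩
      have := cs.length_mul_simple (π ρ) i
      have := length_eraseIdx_add_one hj
      rw [IsReduced, hjρ, hconj]
      rw [IsReduced] at hρred
      omega
    · exact ⟨ρ ++ [i], (append_sublist_append_right _).2 hρω,
        by rw [hπ, wordProd_append, wordProd_singleton],
        (cs.isReduced_append_singleton_iff ρ i).2 ⟨hρred, hasc⟩⟩

def BruhatStep (u v : W) : Prop :=
  ∃ t, cs.IsReflection t ∧ v = t * u ∧ ℓ u < ℓ v

abbrev BruhatChain : W → W → Prop :=
  Relation.ReflTransGen cs.BruhatStep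

theorem bruhatStep_mul_simple {v : W} {i : B} (h : ℓ v < ℓ (v * s i)) :
    cs.BruhatStep v (v * s i) :=
  ⟨v * s i * v⁻¹, ⟨v, i, rfl⟩, by group, h⟩

theorem bruhatChain_mul_simple_of_length_lt {v : W} {i : B} (h : ℓ (v * s i) < ℓ v) :
    cs.BruhatChain (v * s i) v := by
  have := cs.bruhatStep_mul_simple (v := v * s i) (i := i) (by rwa [simple_mul_simple_cancel_right])
  rw [simple_mul_simple_cancel_right] at this
  exact .single this

variable {cs}

theorem BruhatStep.length_lt {u v : W} (h : cs.BruhatStep u v) : ℓ u < ℓ v :=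
  h.choose_spec.2.2

theorem BruhatStep.mul_simple {u v : W} {i : B} (h : cs.BruhatStep u v)
    (hu : ℓ u < ℓ (u * s i)) (hv : ℓ v < ℓ (v * s i)) : cs.BruhatStep (u * s i) (v * s i) := by
  obtain ⟨t, ht, rfl, hlt⟩ := h
  refine ⟨t, ht, mul_assoc _ _ _, ?_⟩
  have := cs.length_mul_simple u i
  have := cs.length_mul_simple (t * u) i
  omega

theorem BruhatChain.exists_reduced_sublist {u v : W} (h : cs.BruhatChain u v) {ω : List B}
    (hω : π ω = v) (hred : cs.IsReduced ω) : ∃ ω', ω' <+ ω ∧ π ω' = u ∧ cs.IsReduced ω' := by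
  induction h using Relation.ReflTransGen.head_induction_on with
  | refl => exact ⟨ω, Sublist.refl ω, hω, hred⟩
  | head hstep _ ih =>
    obtain ⟨ω₁, hω₁ω, hω₁, -⟩ := ih
    obtain ⟨t, ht, rfl, hlt⟩ := hstep
    have htt : ∀ x, t * (t * x) = x := fun x => by rw [← mul_assoc, ht.mul_self, one_mul]
    obtain ⟨j, -, hj⟩ := cs.exists_wordProd_eraseIdx_eq_mul ω₁ ht (by rwa [hω₁, htt])
    obtain ⟨ω₂, hω₂, hπω₂, hred₂⟩ := cs.exists_reduced_sublist (ω₁.eraseIdx j)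
    exact ⟨ω₂, hω₂.trans ((eraseIdx_sublist _ _).trans hω₁ω), by rw [hπω₂, hj, hω₁, htt], hred₂⟩

variable (cs) in
def SubwordsBelow (v : W) : Prop :=
  ∀ ⦃ω : List B⦄, cs.IsReduced ω → π ω = v → ∀ ⦃ω' : List B⦄, ω' <+ ω → cs.BruhatChain (π ω') v

theorem BruhatChain.mul_simple_of_subwordsBelow {u v : W} {i : B} (hv : cs.SubwordsBelow v)
    (h : cs.BruhatChain u v) (hu : ℓ u < ℓ (u * s i)) (hvi : ℓ (v * s i) < ℓ v) :
    cs.BruhatChain (u * s i) v := by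
  obtain ⟨ω, hred, hω⟩ := cs.exists_isReduced (v * s i)
  have hπ : π (ω ++ [i]) = v := by
    rw [wordProd_append, wordProd_singleton, ← hω, simple_mul_simple_cancel_right]
  have hωi : cs.IsReduced (ω ++ [i]) :=
    (cs.isReduced_append_singleton_iff ω i).2 ⟨hred, by rwa [← hω, simple_mul_simple_cancel_right]⟩
  obtain ⟨ω', hω'ω, hω', hred'⟩ := h.exists_reduced_sublist hπ hωi
  rcases sublist_append_singleton_iff.1 hω'ω with hsub | ⟨a, rfl, -⟩
  · have := hv hωi hπ ((append_sublist_append_right [i]).2 hsub)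
    rwa [wordProd_append, wordProd_singleton, hω'] at this
  · have := ((cs.isReduced_append_singleton_iff a i).1 hred').2
    rw [← hω', wordProd_append, wordProd_singleton, simple_mul_simple_cancel_right] at hu
    omega

theorem BruhatChain.mul_simple_mul_simple_of_subwordsBelow {u v : W} {i : B}
    (hbelow : ∀ x, ℓ x < ℓ v → cs.SubwordsBelow x) (h : cs.BruhatChain u v)
    (hu : ℓ u < ℓ (u * s i)) (hv : ℓ v < ℓ (v * s i)) : cs.BruhatChain (u * s i) (v * s i) := by
  induction h with
  | refl => exact .refl
  | @tail x w hux hxw ih =>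
    have hlt := hxw.length_lt
    rcases lt_or_gt_of_ne (cs.length_mul_simple_ne x i) with hx | hx
    · exact ((BruhatChain.mul_simple_of_subwordsBelow (hbelow x hlt) hux hu hx).tail hxw).tail
        (cs.bruhatStep_mul_simple hv)
    · exact (ih (fun y hy => hbelow y (hy.trans hlt)) hx).tail (hxw.mul_simple hx hv)

theorem subwordsBelow (v : W) : cs.SubwordsBelow v := by
  induction hn : ℓ v using Nat.strong_induction_on generalizing v with
  | _ n ih =>
    intro ω hred hω ω' hω'ω
    subst hω
    rcases eq_nil_or_concat' ω with rfl | ⟨ω₁, i, rfl⟩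
    · rw [sublist_nil.1 hω'ω]
    obtain ⟨hred₁, hasc⟩ := (cs.isReduced_append_singleton_iff ω₁ i).1 hred
    have hπ : π (ω₁ ++ [i]) = π ω₁ * s i := by rw [wordProd_append, wordProd_singleton]
    have hlen : ℓ (π ω₁) < n := by rw [← hn, hπ]; exact hasc
    have hbelow : ∀ x, ℓ x < ℓ (π ω₁) → cs.SubwordsBelow x :=
      fun x hx => ih _ (hx.trans hlen) x rfl
    have hstep : cs.BruhatStep (π ω₁) (π (ω₁ ++ [i])) := hπ ▸ cs.bruhatStep_mul_simple hasc
    rcases sublist_append_singleton_iff.1 hω'ω with hsub | ⟨a, rfl, ha⟩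
    · exact (ih _ hlen _ rfl hred₁ rfl hsub).tail hstep
    · have ha' : cs.BruhatChain (π a) (π ω₁) := ih _ hlen _ rfl hred₁ rfl ha
      rw [wordProd_append, wordProd_singleton, hπ]
      rcases lt_or_gt_of_ne (cs.length_mul_simple_ne (π a) i) with hdesc | hasc'
      · exact ((cs.bruhatChain_mul_simple_of_length_lt hdesc).trans ha').tail (hπ ▸ hstep)
      · exact ha'.mul_simple_mul_simple_of_subwordsBelow hbelow hasc' hasc

theorem BruhatChain.mul_simple_of_length_lt {u v : W} {i : B} (h : cs.BruhatChain u v)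
    (hu : ℓ u < ℓ (u * s i)) (hv : ℓ (v * s i) < ℓ v) : cs.BruhatChain (u * s i) v :=
  h.mul_simple_of_subwordsBelow (cs.subwordsBelow v) hu hv

theorem BruhatChain.mul_simple_mul_simple {u v : W} {i : B} (h : cs.BruhatChain u v)
    (hu : ℓ u < ℓ (u * s i)) (hv : ℓ v < ℓ (v * s i)) : cs.BruhatChain (u * s i) (v * s i) :=
  h.mul_simple_mul_simple_of_subwordsBelow (fun x _ => cs.subwordsBelow x) hu hv

theorem isRWordFor_iff {ω : List B} {w : W} : IsRWordFor cs ω w ↔ π ω = w ∧ cs.IsReduced ω := by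
  constructor <;> rintro ⟨rfl, h⟩ <;> exact ⟨rfl, h.symm⟩

theorem bruhatLE_iff_bruhatChain {u v : W} : BruhatLE cs u v ↔ cs.BruhatChain u v := by
  constructor
  · rintro ⟨ω, hω, ω', hω'ω, hω'⟩
    rw [isRWordFor_iff] at hω hω'
    exact hω'.1 ▸ cs.subwordsBelow v hω.2 hω.1 hω'ω
  · intro h
    obtain ⟨ω, hred, rfl⟩ := cs.exists_isReduced v
    obtain ⟨ω', hω'ω, hω', hred'⟩ := h.exists_reduced_sublist rfl hred
    exact ⟨ω, isRWordFor_iff.2 ⟨rfl, hred⟩, ω', hω'ω, isRWordFor_iff.2 ⟨hω', hred'⟩⟩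

theorem BruhatChain.to_demStep {u v : W} (h : cs.BruhatChain u v) (i : B) :
    cs.BruhatChain u (demStep cs v i) := by
  unfold demStep
  split_ifs with hv
  · exact h.tail (cs.bruhatStep_mul_simple hv)
  · exact h

theorem BruhatChain.mul_simple_to_demStep {u v : W} (h : cs.BruhatChain u v) (i : B) :
    cs.BruhatChain (u * s i) (demStep cs v i) := by
  rcases lt_or_gt_of_ne (cs.length_mul_simple_ne u i) with hu | hu
  · exact (cs.bruhatChain_mul_simple_of_length_lt hu).trans (h.to_demStep i)
  unfold demStep
  split_ifs with hv
  · exact h.mul_simple_mul_simple hu hv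
  · exact h.mul_simple_of_length_lt hu (lt_of_le_of_ne (not_lt.1 hv) (cs.length_mul_simple_ne v i))

theorem dem_append_singleton (Q : List B) (i : B) :
    dem cs (Q ++ [i]) = demStep cs (dem cs Q) i := by
  simp [dem]

theorem exists_reduced_sublist_dem (Q : List B) :
    ∃ ω, ω <+ Q ∧ π ω = dem cs Q ∧ cs.IsReduced ω := by
  induction Q using List.reverseRecOn with
  | nil => exact ⟨[], .refl _, by simp [dem], by simp [IsReduced]⟩
  | append_singleton Q i ih =>
    obtain ⟨ω, hωQ, hω, hred⟩ := ih
    rw [dem_append_singleton, demStep]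
    split_ifs with hasc
    · exact ⟨ω ++ [i], (append_sublist_append_right _).2 hωQ,
        by rw [wordProd_append, wordProd_singleton, hω],
        (cs.isReduced_append_singleton_iff ω i).2 ⟨hred, hω ▸ hasc⟩⟩
    · exact ⟨ω, hωQ.trans (sublist_append_left _ _), hω, hred⟩

theorem bruhatChain_dem_of_sublist {ω Q : List B} (h : ω <+ Q) :
    cs.BruhatChain (π ω) (dem cs Q) := by
  induction Q using List.reverseRecOn generalizing ω with
  | nil => rw [sublist_nil.1 h]; exact .refl
  | append_singleton Q i ih =>
    rw [dem_append_singleton]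
    rcases sublist_append_singleton_iff.1 h with h | ⟨a, rfl, ha⟩
    · exact (ih h).to_demStep i
    · rw [wordProd_append, wordProd_singleton]
      exact (ih ha).mul_simple_to_demStep i

end

end CoxeterSystem

/-- `w ≤ Dem(Q)` in Bruhat order iff `Q` contains a subword that is a reduced expression
for `w`. -/
theorem bruhatLE_demazure_iff_subword (cs : CoxeterSystem M W) (Q : List B) (w : W) :
    BruhatLE cs w (dem cs Q) ↔ ∃ l : List B, l.Sublist Q ∧ IsRWordFor cs l w := by
  rw [CoxeterSystem.bruhatLE_iff_bruhatChain]
  constructor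
  · intro h
    obtain ⟨m, hmQ, hm, hred⟩ := cs.exists_reduced_sublist_dem Q
    obtain ⟨l, hlm, hl, hlred⟩ := h.exists_reduced_sublist hm hred
    exact ⟨l, hlm.trans hmQ, CoxeterSystem.isRWordFor_iff.2 ⟨hl, hlred⟩⟩
  · rintro ⟨l, hlQ, hl, -⟩
    exact hl ▸ cs.bruhatChain_dem_of_sublist hlQ
end

section
/- Let W be a finite Weyl group with word Q and w = Dem(Q). For two facets F and F' of the subword complex Δ(Q,w) that differ in exactly one position each (F∖{i} = F'∖{j} with i ≠ j), the brick vectors satisfy B(F) − B(F') ∈ ℝ·r(F,i), i.e., the difference of brick vectors of adjacent facets is a scalar multiple of the root r(F,i). -/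
open List

variable {B : Type*} [DecidableEq B] {W : Type*} [Group W] {M : CoxeterMatrix B}

/-- The ordered product of the letters of `Q∖J` at positions `< k`
(the prefix `(Q∖J)_(k-1)`). -/
def pcLt (cs : CoxeterSystem M W) (Q : List B) (J : Finset (Fin Q.length))
    (k : Fin Q.length) : W :=
  cs.wordProd (((List.finRange Q.length).filter (fun i => i < k ∧ i ∉ J)).map Q.get)

/-- The brick vector of a face `F`: `B(F) = Σ_k w(F,k)` where
`w(F,k) = (Q∖F)_(k-1)(ω_{q_k})` is the weight function. -/
noncomputable def brickVec (cs : CoxeterSystem M W) {n : ℕ}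
    (ρ : Representation ℝ W (Fin n → ℝ)) (ω : B → Fin n → ℝ) (Q : List B)
    (F : Finset (Fin Q.length)) : Fin n → ℝ :=
  ∑ k : Fin Q.length, ρ (pcLt cs Q F k) (ω (Q.get k))

/-! Write the ordered products of `Q∖F` and `Q∖F'` as prefix products of two sequences `x`, `y`
of simple reflections and `1`s that agree away from `i` and `j`, with `x i = 1` and
`y i = s := s_{q_i}`. Since both total products equal `w`, every prefix of `y` either equals the
corresponding prefix of `x` or arises from it by inserting `s` right after `g := (Q∖F)_{i-1}`.
In the second case `w(F,k) - w(F',k) = g (v - s v)` for some `v` in the span of the roots and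
weights; this span is `W`-stable and `s_q` moves each of its vectors by a multiple of `α_q`,
so the difference is a multiple of `g α_{q_i} = r(F,i)`. -/

theorem List.prod_map_filter_eq_prod_map_ite {α G : Type*} [Monoid G] (p : α → Prop)
    [DecidablePred p] (f : α → G) (l : List α) :
    ((l.filter p).map f).prod = (l.map fun a => if p a then f a else 1).prod := by
  induction l with
  | nil => rfl
  | cons a l ih => by_cases ha : p a <;> simp [ha, ih]

theorem Finset.notMem_of_erase_eq_erase {α : Type*} [DecidableEq α] {s t : Finset α} {a b : α}
    (h : s.erase a = t.erase b) (hab : a ≠ b) : a ∉ t := fun ha =>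
  Finset.notMem_erase a s (h ▸ Finset.mem_erase.2 ⟨hab, ha⟩)

section PrefixProd

variable {G : Type*} [Group G]

def prefixProd (x : ℕ → G) (n : ℕ) : G :=
  ((List.range n).map x).prod

@[simp]
theorem prefixProd_zero (x : ℕ → G) : prefixProd x 0 = 1 := rfl

theorem prefixProd_succ (x : ℕ → G) (n : ℕ) : prefixProd x (n + 1) = prefixProd x n * x n :=
  List.prod_range_succ x n

theorem prod_map_range_ite_lt (x : ℕ → G) {n N : ℕ} (hn : n ≤ N) :
    ((List.range N).map fun t => if t < n then x t else 1).prod = prefixProd x n := by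
  obtain ⟨m, rfl⟩ := Nat.exists_eq_add_of_le hn
  rw [List.range_add, List.map_append, List.prod_append, List.map_map,
    List.prod_eq_one (l := List.map _ (List.range m)) (by simp), mul_one, prefixProd]
  exact congrArg List.prod (List.map_congr_left fun t ht => if_pos (List.mem_range.1 ht))

theorem inv_prefixProd_mul_eq_of_eqOn {x y : ℕ → G} {a b : ℕ} (hab : a ≤ b)
    (h : ∀ t, a ≤ t → t < b → x t = y t) :
    (prefixProd x a)⁻¹ * prefixProd x b = (prefixProd y a)⁻¹ * prefixProd y b := by
  induction b, hab using Nat.le_induction with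
  | base => simp
  | succ b hab ih =>
    rw [prefixProd_succ, prefixProd_succ, ← mul_assoc, ← mul_assoc,
      ih fun t h₁ h₂ => h t h₁ (by omega), h b hab (by omega)]

theorem prefixProd_eq_of_eqOn_lt {x y : ℕ → G} {n : ℕ} (h : ∀ t < n, x t = y t) :
    prefixProd x n = prefixProd y n := by
  simpa using inv_prefixProd_mul_eq_of_eqOn (Nat.zero_le n) fun t _ ht => h t ht

theorem prefixProd_eq_of_eqOn_ge {x y : ℕ → G} {n N : ℕ} (hn : n ≤ N)
    (h : ∀ t, n ≤ t → t < N → x t = y t) (hN : prefixProd x N = prefixProd y N) :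
    prefixProd x n = prefixProd y n := by
  have := inv_prefixProd_mul_eq_of_eqOn hn h
  rw [hN] at this
  exact inv_injective (mul_right_cancel this)

theorem prefixProd_eq_or_insert {x y : ℕ → G} {i j N : ℕ} (hi : i < N)
    (hxy : ∀ t, t ≠ i → t ≠ j → x t = y t) (hxi : x i = 1) (hyi : y i * y i = 1)
    (hN : prefixProd x N = prefixProd y N) {k : ℕ} (hk : k ≤ N) :
    prefixProd y k = prefixProd x k ∨
      ∃ u, prefixProd x k = prefixProd x i * u ∧ prefixProd y k = prefixProd x i * y i * u := by
  by_cases hlo : k ≤ min i j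
  · exact Or.inl (prefixProd_eq_of_eqOn_lt fun t ht => (hxy t (by omega) (by omega)).symm)
  by_cases hhi : max i j < k
  · exact Or.inl (prefixProd_eq_of_eqOn_ge hk (fun t h₁ _ => (hxy t (by omega) (by omega)).symm)
      hN.symm)
  right
  rcases lt_or_gt_of_ne (show i ≠ j by omega) with hij | hji
  · have hpre : prefixProd x i = prefixProd y i :=
      prefixProd_eq_of_eqOn_lt fun t ht => hxy t (by omega) (by omega)
    have hseg := inv_prefixProd_mul_eq_of_eqOn (show i + 1 ≤ k by omega)
      fun t h₁ h₂ => hxy t (by omega) (by omega)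
    rw [prefixProd_succ, prefixProd_succ, hxi, mul_one, ← hpre] at hseg
    refine ⟨(prefixProd x i)⁻¹ * prefixProd x k, by group, ?_⟩
    rw [hseg]
    group
  · have hsucc : prefixProd x (i + 1) = prefixProd y (i + 1) :=
      prefixProd_eq_of_eqOn_ge hi (fun t h₁ _ => hxy t (by omega) (by omega)) hN
    have hyi' : prefixProd y i = prefixProd x i * y i := by
      rw [prefixProd_succ, prefixProd_succ, hxi, mul_one] at hsucc
      rw [hsucc, mul_assoc, hyi, mul_one]
    have hseg := inv_prefixProd_mul_eq_of_eqOn (show k ≤ i by omega)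
      fun t h₁ h₂ => hxy t (by omega) (by omega)
    refine ⟨(prefixProd x i)⁻¹ * prefixProd x k, by group, ?_⟩
    have hseg' := congrArg (·⁻¹) hseg
    simp only [mul_inv_rev, inv_inv] at hseg'
    rw [← hyi', hseg']
    group

end PrefixProd

section Representation

variable {ι G k V : Type*} [Group G] {C : CoxeterMatrix ι} (cs : CoxeterSystem C G)
  [CommRing k] [AddCommGroup V] [Module k V] (ρ : Representation k G V) {α : ι → V} {S : Set V}

theorem simple_apply_sub_mem_span_singleton (hS : ∀ i, ∀ v ∈ S, ρ (cs.simple i) v - v ∈ k ∙ α i)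
    (i : ι) {v : V} (hv : v ∈ Submodule.span k S) : ρ (cs.simple i) v - v ∈ k ∙ α i := by
  have : Submodule.span k S ≤ (k ∙ α i).comap (ρ (cs.simple i) - LinearMap.id) :=
    Submodule.span_le.2 (hS i)
  simpa using this hv

theorem apply_mem_span (hα : ∀ i, α i ∈ Submodule.span k S)
    (hS : ∀ i, ∀ v ∈ S, ρ (cs.simple i) v - v ∈ k ∙ α i) (g : G) {v : V}
    (hv : v ∈ Submodule.span k S) : ρ g v ∈ Submodule.span k S := by
  induction g using cs.simple_induction_left with
  | one => simpa using hv
  | mul_simple_left g i ih =>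
    have hmove := simple_apply_sub_mem_span_singleton cs ρ hS i ih
    rw [map_mul, Module.End.mul_apply, ← sub_add_cancel (ρ (cs.simple i) (ρ g v)) (ρ g v)]
    exact add_mem ((Submodule.span_singleton_le_iff_mem _ _).2 (hα i) hmove) ih

theorem apply_mul_sub_apply_mul_simple_mul_mem (hα : ∀ i, α i ∈ Submodule.span k S)
    (hS : ∀ i, ∀ v ∈ S, ρ (cs.simple i) v - v ∈ k ∙ α i) (g u : G) (i : ι) {v : V}
    (hv : v ∈ Submodule.span k S) :
    ρ (g * u) v - ρ (g * cs.simple i * u) v ∈ k ∙ ρ g (α i) := by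
  obtain ⟨μ, hμ⟩ := Submodule.mem_span_singleton.1
    (simple_apply_sub_mem_span_singleton cs ρ hS i (apply_mem_span cs ρ hα hS u hv))
  refine Submodule.mem_span_singleton.2 ⟨-μ, ?_⟩
  simp only [map_mul, Module.End.mul_apply]
  rw [← map_smul, ← map_sub, neg_smul, hμ, neg_sub]

end Representation

def complementLetter {ι G : Type*} [Group G] {C : CoxeterMatrix ι} (cs : CoxeterSystem C G)
    (Q : List ι) (J : Finset (Fin Q.length)) (t : ℕ) : G :=
  if h : t < Q.length then if ⟨t, h⟩ ∈ J then 1 else cs.simple (Q.get ⟨t, h⟩) else 1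

section ComplementLetter

variable {ι G : Type*} [Group G] {C : CoxeterMatrix ι} (cs : CoxeterSystem C G) {Q : List ι}

theorem complementLetter_of_mem {J : Finset (Fin Q.length)} {t : Fin Q.length} (ht : t ∈ J) :
    complementLetter cs Q J t = 1 := by
  simp [complementLetter, ht]

theorem complementLetter_of_notMem {J : Finset (Fin Q.length)} {t : Fin Q.length} (ht : t ∉ J) :
    complementLetter cs Q J t = cs.simple (Q.get t) := by
  simp [complementLetter, ht]

theorem complementLetter_eq_of_erase_eq {F F' : Finset (Fin Q.length)} {i j : Fin Q.length}
    (hflip : F.erase i = F'.erase j) {t : ℕ} (hti : t ≠ i) (htj : t ≠ j) :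
    complementLetter cs Q F t = complementLetter cs Q F' t := by
  by_cases h : t < Q.length
  · have hiff : (⟨t, h⟩ : Fin Q.length) ∈ F ↔ ⟨t, h⟩ ∈ F' := by
      simpa [Fin.ext_iff, hti, htj] using Finset.ext_iff.1 hflip ⟨t, h⟩
    simp only [complementLetter, h, dif_pos, hiff]
  · simp [complementLetter, h]

theorem wordProd_filter_lt_eq_prefixProd (J : Finset (Fin Q.length)) {n : ℕ}
    (hn : n ≤ Q.length) :
    cs.wordProd (((List.finRange Q.length).filter fun t => t.val < n ∧ t ∉ J).map Q.get) =
      prefixProd (complementLetter cs Q J) n := by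
  rw [CoxeterSystem.wordProd, List.map_map, List.prod_map_filter_eq_prod_map_ite,
    ← prod_map_range_ite_lt _ hn, ← List.map_coe_finRange_eq_range, List.map_map]
  refine congrArg List.prod (List.map_congr_left fun t _ => ?_)
  by_cases ht : t ∈ J <;> simp [complementLetter, ht]

theorem pcLt_eq_prefixProd (J : Finset (Fin Q.length)) (t : Fin Q.length) :
    pcLt cs Q J t = prefixProd (complementLetter cs Q J) t :=
  wordProd_filter_lt_eq_prefixProd cs J t.isLt.le

theorem wordProd_cword_eq_prefixProd (J : Finset (Fin Q.length)) :
    cs.wordProd (cword Q J) = prefixProd (complementLetter cs Q J) Q.length := by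
  rw [← wordProd_filter_lt_eq_prefixProd cs J le_rfl, cword]
  simp

end ComplementLetter

theorem brick_vector_difference_parallel_root_general (cs : CoxeterSystem M W) (n : ℕ)
    (ρ : Representation ℝ W (Fin n → ℝ)) (α ω : B → Fin n → ℝ) (A : B → B → ℝ)
    (hα : ∀ i j : B, ρ (cs.simple i) (α j) = α j - A i j • α i)
    (hω : ∀ i j : B, ρ (cs.simple i) (ω j) = ω j - (if j = i then (1 : ℝ) else 0) • α i)
    (Q : List B) (w : W)
    (F F' : Finset (Fin Q.length)) (hF : IsFacet cs Q w F) (hF' : IsFacet cs Q w F')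
    (i j : Fin Q.length) (hi : i ∈ F) (hij : i ≠ j)
    (hflip : F.erase i = F'.erase j) :
    ∃ c : ℝ, brickVec cs ρ ω Q F - brickVec cs ρ ω Q F' =
      c • ρ (pcLt cs Q F i) (α (Q.get i)) := by
  have hiF' : i ∉ F' := Finset.notMem_of_erase_eq_erase hflip hij
  have hN : prefixProd (complementLetter cs Q F) Q.length =
      prefixProd (complementLetter cs Q F') Q.length := by
    rw [← wordProd_cword_eq_prefixProd, ← wordProd_cword_eq_prefixProd, hF.1, hF'.1]
  have hS : ∀ c, ∀ v ∈ Set.range α ∪ Set.range ω, ρ (cs.simple c) v - v ∈ ℝ ∙ α c := by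
    rintro c _ (⟨b, rfl⟩ | ⟨b, rfl⟩) <;> simp only [hα, hω, sub_sub_cancel_left] <;>
      exact neg_mem (Submodule.smul_mem _ _ (Submodule.mem_span_singleton_self _))
  suffices h : brickVec cs ρ ω Q F - brickVec cs ρ ω Q F' ∈ ℝ ∙ ρ (pcLt cs Q F i) (α (Q.get i)) by
    obtain ⟨c, hc⟩ := Submodule.mem_span_singleton.1 h
    exact ⟨c, hc.symm⟩
  rw [brickVec, brickVec, ← Finset.sum_sub_distrib]
  refine Submodule.sum_mem _ fun k _ => ?_
  simp only [pcLt_eq_prefixProd]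
  rcases prefixProd_eq_or_insert i.isLt
    (fun t hti htj => complementLetter_eq_of_erase_eq cs hflip hti htj)
    (complementLetter_of_mem cs hi)
    (by rw [complementLetter_of_notMem cs hiF', cs.simple_mul_simple_self]) hN k.isLt.le
    with h | ⟨u, hx, hy⟩
  · rw [h, sub_self]
    exact zero_mem _
  · rw [hx, hy, complementLetter_of_notMem cs hiF']
    exact apply_mul_sub_apply_mul_simple_mul_mem cs ρ
      (fun c => Submodule.subset_span (Or.inl ⟨c, rfl⟩)) hS _ _ _
      (Submodule.subset_span (Or.inr ⟨_, rfl⟩))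

/-- For two facets `F`, `F'` of `Δ(Q,w)` related by a flip (`F∖{i} = F'∖{j}` with `i ≠ j`),
the difference of brick vectors is a scalar multiple of the root `r(F,i)`. -/
theorem brick_vector_difference_parallel_root (cs : CoxeterSystem M W) (n : ℕ)
    (ρ : Representation ℝ W (Fin n → ℝ)) (α ω : B → Fin n → ℝ) (A : B → B → ℝ)
    (hA : ∀ i : B, A i i = 2)
    (hα : ∀ i j : B, ρ (cs.simple i) (α j) = α j - A i j • α i)
    (hω : ∀ i j : B, ρ (cs.simple i) (ω j) = ω j - (if j = i then (1 : ℝ) else 0) • α i)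
    (Q : List B) (w : W) (hw : dem cs Q = w)
    (F F' : Finset (Fin Q.length)) (hF : IsFacet cs Q w F) (hF' : IsFacet cs Q w F')
    (i j : Fin Q.length) (hi : i ∈ F) (hj : j ∈ F') (hij : i ≠ j)
    (hflip : F.erase i = F'.erase j) :
    ∃ c : ℝ, brickVec cs ρ ω Q F - brickVec cs ρ ω Q F' =
      c • ρ (pcLt cs Q F i) (α (Q.get i)) :=
  brick_vector_difference_parallel_root_general cs n ρ α ω A hα hω Q w F F' hF hF' i j hi hij hflip
end

section
/- If u ≤ v in the Bruhat order of a finite Coxeter group W with longest element w_0, R is a reduced word for v, and S is a reduced word for u^{-1}w_0, then the Demazure product of the concatenation Q = R + S equals w_0. -/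
open List

variable {B : Type*} [DecidableEq B] {W : Type*} [Group W] {M : CoxeterMatrix B}

/-!
Write `⋆` for the Demazure product. As `R` is reduced, `Dem(R ++ S) = v ⋆ s_{j₁} ⋆ ⋯ ⋆ s_{jₖ}`
where `S = j₁ ⋯ jₖ`. The lifting property of the Bruhat order gives `x * s ≤ y ⋆ s` whenever
`x ≤ y`, so `w₀ = u * (u⁻¹ * w₀) ≤ Dem(R ++ S)`, and since no element is longer than `w₀` the two
are equal.

The Bruhat order is used in its chain form. The lifting property and the half of the subword
property needed to pass from `BruhatLE` to chains are proved together by induction on length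
(Björner–Brenti, Ch. 2), from the strong exchange condition; the latter comes from the action of
`W` on `W × ZMod 2` in which `s i` conjugates the first coordinate and flips the second at `s i`
(Björner–Brenti, Thm. 1.4.3).
-/

theorem List.sublist_append_singleton_iff_s14 {α : Type*} {l k : List α} {c : α} :
    l.Sublist (k ++ [c]) ↔ l.Sublist k ∨ ∃ k', l = k' ++ [c] ∧ k'.Sublist k := by
  constructor
  · rw [List.sublist_append_iff]
    rintro ⟨l₁, l₂, rfl, h₁, h₂⟩
    rcases List.sublist_singleton.mp h₂ with rfl | rfl
    · exact .inl (by simpa using h₁)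
    · exact .inr ⟨l₁, rfl, h₁⟩
  · rintro (h | ⟨k', rfl, h⟩)
    · exact h.trans (List.sublist_append_left _ _)
    · exact h.append_right [c]

omit [DecidableEq B] in
theorem IsRWordFor.isReduced {cs : CoxeterSystem M W} {ω : List B} {w : W}
    (h : IsRWordFor cs ω w) : cs.IsReduced ω := by
  rw [CoxeterSystem.IsReduced, h.1, h.2]

namespace CoxeterSystem

open scoped Classical

section
omit [DecidableEq B]

variable (cs : CoxeterSystem M W)

noncomputable def reflSignPerm (i : B) : Equiv.Perm (W × ZMod 2) :=
  Function.Involutive.toPerm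
    (fun p => (cs.simple i * p.1 * cs.simple i, p.2 + if p.1 = cs.simple i then 1 else 0))
    (by
      rintro ⟨t, z⟩
      have hconj : cs.simple i * t * cs.simple i = cs.simple i ↔ t = cs.simple i := by
        rw [mul_eq_right, mul_eq_one_iff_eq_inv', cs.inv_simple]
      simp only [hconj, Prod.mk.injEq, ← mul_assoc, cs.simple_mul_simple_self, one_mul,
        cs.simple_mul_simple_cancel_right, add_assoc, true_and]
      split_ifs <;> decide +revert)

theorem reflSignPerm_apply (i : B) (t : W) (z : ZMod 2) :
    cs.reflSignPerm i (t, z) =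
      (cs.simple i * t * cs.simple i, z + if t = cs.simple i then 1 else 0) := rfl

theorem prod_reverse_map_reflSignPerm_apply (ω : List B) (t : W) (z : ZMod 2) :
    (ω.map cs.reflSignPerm).reverse.prod (t, z) =
      ((cs.wordProd ω)⁻¹ * t * cs.wordProd ω, z + (cs.leftInvSeq ω).count t) := by
  induction ω generalizing t z with
  | nil => simp
  | cons i ω ih =>
    have hcount : (cs.leftInvSeq (i :: ω)).count t =
        (cs.leftInvSeq ω).count (cs.simple i * t * cs.simple i) +
          if t = cs.simple i then 1 else 0 := by
      have ht : t = MulAut.conj (cs.simple i) (cs.simple i * t * cs.simple i) := by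
        simp only [MulAut.conj_apply, cs.inv_simple, ← mul_assoc, cs.simple_mul_simple_self,
          one_mul, cs.simple_mul_simple_cancel_right]
      rw [leftInvSeq, List.count_cons, ht,
        List.count_map_of_injective _ _ (MulAut.conj _).injective, ← ht]
      simp only [beq_iff_eq, eq_comm (a := cs.simple i)]
    simp only [List.map_cons, List.reverse_cons, List.prod_append, List.prod_singleton,
      Equiv.Perm.mul_apply, reflSignPerm_apply, ih, wordProd_cons, hcount]
    refine Prod.ext (by simp [mul_assoc, cs.inv_simple]) ?_
    split_ifs <;> push_cast <;> ring

theorem pow_mul_reflSignPerm (i j : B) (m : ℕ) :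
    (cs.reflSignPerm i * cs.reflSignPerm j) ^ m =
      ((alternatingWord j i (2 * m)).map cs.reflSignPerm).reverse.prod := by
  induction m with
  | zero => simp [alternatingWord]
  | succ m ih =>
    rw [pow_succ', ih, show 2 * (m + 1) = 2 * m + 1 + 1 by ring, alternatingWord_succ,
      alternatingWord_succ]
    simp [mul_assoc]

theorem even_count_leftInvSeq_alternatingWord (i j : B) (t : W) :
    Even ((cs.leftInvSeq (alternatingWord j i (2 * M i j))).count t) := by
  set f : ℕ → W := fun k => cs.wordProd (alternatingWord i j (2 * k + 1))
  have hlis : cs.leftInvSeq (alternatingWord j i (2 * M i j)) = (List.range (2 * M i j)).map f :=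
    List.ext_getElem (by simp) fun k _ hk => by
      rw [getElem_leftInvSeq_alternatingWord _ _ _ _ _ (by simpa using hk)]
      simp [f]
  have hperiodic : f ∘ (M i j + ·) = f := by
    funext k
    simp only [Function.comp_apply, f, prod_alternatingWord_eq_mul_pow, Nat.not_even_bit1, if_false]
    rw [show (2 * (M i j + k) + 1) / 2 = M i j + k by omega,
      show (2 * k + 1) / 2 = k by omega, pow_add, cs.simple_mul_simple_pow, one_mul]
  rw [hlis, two_mul, List.range_add, List.map_append, List.map_map, List.count_append, hperiodic]
  exact Even.add_self _

theorem isLiftable_reflSignPerm : M.IsLiftable cs.reflSignPerm := by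
  intro i j
  ext ⟨t, z⟩ : 1
  rw [pow_mul_reflSignPerm, prod_reverse_map_reflSignPerm_apply,
    (ZMod.natCast_eq_zero_iff_even).mpr (cs.even_count_leftInvSeq_alternatingWord i j t),
    prod_alternatingWord_eq_mul_pow]
  simp

noncomputable def reflSignHom : W →* Equiv.Perm (W × ZMod 2) :=
  cs.lift ⟨cs.reflSignPerm, cs.isLiftable_reflSignPerm⟩

theorem reflSignHom_simple (i : B) : cs.reflSignHom (cs.simple i) = cs.reflSignPerm i :=
  cs.lift_apply_simple cs.isLiftable_reflSignPerm i

theorem reflSignHom_wordProd_apply (ω : List B) (t : W) (z : ZMod 2) :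
    cs.reflSignHom (cs.wordProd ω) (t, z) =
      (cs.wordProd ω * t * (cs.wordProd ω)⁻¹, z + (cs.rightInvSeq ω).count t) := by
  have h : cs.reflSignHom (cs.wordProd ω) = (ω.reverse.map cs.reflSignPerm).reverse.prod := by
    rw [List.map_reverse, List.reverse_reverse, wordProd, map_list_prod, List.map_map]
    simp only [Function.comp_def, reflSignHom_simple]
  rw [h, prod_reverse_map_reflSignPerm_apply, wordProd_reverse, leftInvSeq_reverse,
    List.count_reverse, inv_inv]

/-- By `reflParity_wordProd`, the parity of the number of occurrences of `t` in the right inversion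
sequence of a word for `w` depends only on `w`; this invariant yields the strong exchange
condition. -/
noncomputable def reflParity (w t : W) : ZMod 2 := (cs.reflSignHom w (t, 0)).2

theorem reflSignHom_apply (w t : W) (z : ZMod 2) :
    cs.reflSignHom w (t, z) = (w * t * w⁻¹, z + cs.reflParity w t) := by
  obtain ⟨ω, rfl⟩ := cs.wordProd_surjective w
  simp [reflParity, reflSignHom_wordProd_apply]

theorem reflParity_wordProd (ω : List B) (t : W) :
    cs.reflParity (cs.wordProd ω) t = (cs.rightInvSeq ω).count t := by
  simp [reflParity, reflSignHom_wordProd_apply]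

theorem reflParity_self {t : W} (ht : cs.IsReflection t) : cs.reflParity t t = 1 := by
  obtain ⟨g, i, rfl⟩ := ht
  have hcancel : cs.reflSignHom g (cs.reflSignHom g⁻¹ (g * cs.simple i * g⁻¹, 0)) =
      (g * cs.simple i * g⁻¹, 0) := by
    rw [← Equiv.Perm.mul_apply, ← map_mul, mul_inv_cancel, map_one, Equiv.Perm.one_apply]
  have hconj : cs.reflSignHom (g * cs.simple i * g⁻¹) (g * cs.simple i * g⁻¹, 0) =
      cs.reflSignHom g (cs.reflSignPerm i (cs.reflSignHom g⁻¹ (g * cs.simple i * g⁻¹, 0))) := by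
    simp only [map_mul, map_inv, Equiv.Perm.mul_apply, reflSignHom_simple]
  have hs : g⁻¹ * (g * cs.simple i * g⁻¹) * g = cs.simple i := by group
  simp only [reflSignHom_apply, reflSignPerm_apply, inv_inv, hs, if_true,
    cs.simple_mul_simple_self, one_mul, Prod.mk.injEq, zero_add] at hcancel hconj
  linear_combination hconj.2 + hcancel.2

theorem reflParity_mul_self {t : W} (ht : cs.IsReflection t) (w : W) :
    cs.reflParity (w * t) t = cs.reflParity w t + 1 := by
  have h := cs.reflSignHom_apply (w * t) t 0
  rw [map_mul, Equiv.Perm.mul_apply, reflSignHom_apply, reflSignHom_apply, cs.reflParity_self ht,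
    ht.inv, ht.mul_self, one_mul] at h
  linear_combination (congrArg Prod.snd h).symm

theorem mem_rightInvSeq_of_length_mul_lt {ω : List B} {t : W}
    (ht : cs.IsReflection t) (hlt : cs.length (cs.wordProd ω * t) < cs.length (cs.wordProd ω)) :
    t ∈ cs.rightInvSeq ω := by
  by_contra hmem
  obtain ⟨r, hr, hπr⟩ := cs.exists_isReduced (cs.wordProd ω * t)
  have hmem_r : t ∈ cs.rightInvSeq r := by
    have h := cs.reflParity_mul_self ht (cs.wordProd ω)
    rw [hπr, reflParity_wordProd, reflParity_wordProd, List.count_eq_zero_of_not_mem hmem] at h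
    rw [← List.count_pos_iff, Nat.pos_iff_ne_zero]
    rintro h0
    simp [h0] at h
  have hinv := (cs.isRightInversion_of_mem_rightInvSeq hr hmem_r).2
  rw [← hπr, mul_assoc, ht.mul_self, mul_one] at hinv
  omega

theorem exists_eraseIdx_wordProd_eq_mul {ω : List B} {t : W}
    (ht : cs.IsReflection t) (hlt : cs.length (cs.wordProd ω * t) < cs.length (cs.wordProd ω)) :
    ∃ j < ω.length, cs.wordProd (ω.eraseIdx j) = cs.wordProd ω * t := by
  obtain ⟨j, hj, hget⟩ := List.mem_iff_getElem.mp (cs.mem_rightInvSeq_of_length_mul_lt ht hlt)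
  refine ⟨j, by simpa using hj, ?_⟩
  rw [← wordProd_mul_getD_rightInvSeq, List.getD_eq_getElem _ _ hj, hget]

theorem length_lt_length_mul_simple_of_isReduced_append {ω : List B} {i : B}
    (h : cs.IsReduced (ω ++ [i])) :
    cs.length (cs.wordProd ω) < cs.length (cs.wordProd ω * cs.simple i) := by
  have hlen := h.eq
  rw [wordProd_append, wordProd_singleton, List.length_append, List.length_singleton] at hlen
  have := cs.length_wordProd_le ω
  omega

theorem exists_isReduced_sublist (ω : List B) :
    ∃ ω' : List B, ω'.Sublist ω ∧ cs.IsReduced ω' ∧ cs.wordProd ω' = cs.wordProd ω := by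
  induction ω using List.reverseRecOn with
  | nil => exact ⟨[], List.Sublist.refl _, by simp [IsReduced], rfl⟩
  | append_singleton ω i ih =>
    obtain ⟨ω', hsub, hred, hπ⟩ := ih
    have hπi : cs.wordProd (ω ++ [i]) = cs.wordProd ω' * cs.simple i := by
      rw [wordProd_append, wordProd_singleton, hπ]
    rcases cs.length_mul_simple (cs.wordProd ω') i with hup | hdown
    · refine ⟨ω' ++ [i], hsub.append_right [i], ?_, by rw [hπi, wordProd_append, wordProd_singleton]⟩
      rw [IsReduced, wordProd_append, wordProd_singleton, hup, hred.eq, List.length_append,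
        List.length_singleton]
    · obtain ⟨j, hj, hπj⟩ :=
        cs.exists_eraseIdx_wordProd_eq_mul (ω := ω') (cs.isReflection_simple i) (by omega)
      refine ⟨ω'.eraseIdx j, (List.eraseIdx_sublist _ _).trans
        (hsub.trans (List.sublist_append_left _ _)), ?_, by rw [hπj, hπi]⟩
      rw [IsReduced, hπj, List.length_eraseIdx_of_lt hj, ← hred.eq]
      omega

theorem exists_isReduced_sublist_wordProd_eq_of_length_lt_mul {x t : W} (ht : cs.IsReflection t)
    (hlt : cs.length x < cs.length (x * t)) {ω : List B} (hω : cs.wordProd ω = x * t) :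
    ∃ ω' : List B, ω'.Sublist ω ∧ cs.IsReduced ω' ∧ cs.wordProd ω' = x := by
  obtain ⟨j, -, hπj⟩ := cs.exists_eraseIdx_wordProd_eq_mul (ω := ω) ht
    (by rwa [hω, mul_assoc, ht.mul_self, mul_one])
  obtain ⟨ω', hsub, hred, hπ⟩ := cs.exists_isReduced_sublist (ω.eraseIdx j)
  refine ⟨ω', hsub.trans (List.eraseIdx_sublist _ _), hred, ?_⟩
  rw [hπ, hπj, hω, mul_assoc, ht.mul_self, mul_one]

/-- The Bruhat order `≤` in its chain form. -/
def ChainLE : W → W → Prop :=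
  Relation.ReflTransGen fun a b => ∃ t, cs.IsReflection t ∧ b = a * t ∧ cs.length a < cs.length b

variable {cs}

theorem chainLE_mul_of_length_lt {x t : W} (ht : cs.IsReflection t)
    (hlt : cs.length x < cs.length (x * t)) : cs.ChainLE x (x * t) :=
  .single ⟨t, ht, rfl, hlt⟩

theorem ChainLE.length_le {x y : W} (h : cs.ChainLE x y) : cs.length x ≤ cs.length y := by
  induction h with
  | refl => rfl
  | tail _ hstep ih => obtain ⟨_, _, _, hlt⟩ := hstep; omega

theorem ChainLE.eq_of_length_le {x y : W} (h : cs.ChainLE x y)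
    (hlen : cs.length y ≤ cs.length x) : x = y := by
  rcases Relation.ReflTransGen.cases_tail h with rfl | ⟨y', hxy', _, _, _, hlt⟩
  · rfl
  · have := ChainLE.length_le hxy'
    omega

variable (cs)

def LiftsUp (y : W) : Prop :=
  ∀ x i, cs.ChainLE x y → cs.length y < cs.length (y * cs.simple i) →
    cs.ChainLE (x * cs.simple i) (y * cs.simple i)

def LiftsDown (y : W) : Prop :=
  ∀ x i, cs.ChainLE x y → cs.length (y * cs.simple i) < cs.length y →
    cs.ChainLE (x * cs.simple i) y

theorem chainLE_wordProd_of_sublist_of_liftsUp {ω : List B} (hω : cs.IsReduced ω)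
    (hup : ∀ y, cs.length y < ω.length → cs.LiftsUp y) {ω' : List B} (hsub : ω'.Sublist ω)
    (hω' : cs.IsReduced ω') : cs.ChainLE (cs.wordProd ω') (cs.wordProd ω) := by
  induction ω using List.reverseRecOn generalizing ω' with
  | nil => rw [List.sublist_nil.mp hsub]; exact .refl
  | append_singleton κ c ih =>
    have hκ : cs.IsReduced κ := by simpa using hω.take κ.length
    have hup_κ := cs.length_lt_length_mul_simple_of_isReduced_append hω
    have ih' := @ih hκ fun y hy => hup y (by simp; omega)
    rw [wordProd_append, wordProd_singleton]
    rcases List.sublist_append_singleton_iff_s14.mp hsub with hsubκ | ⟨κ', rfl, hsubκ⟩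
    · exact (ih' hsubκ hω').tail ⟨_, cs.isReflection_simple c, rfl, hup_κ⟩
    · rw [wordProd_append, wordProd_singleton]
      exact hup _ (by rw [hκ.eq]; simp) _ c (ih' hsubκ (by simpa using hω'.take κ'.length)) hup_κ

theorem liftsUp_of_forall_length_lt {y : W}
    (ih : ∀ y', cs.length y' < cs.length y → cs.LiftsUp y' ∧ cs.LiftsDown y') : cs.LiftsUp y := by
  intro x i hxy hup
  rcases Relation.ReflTransGen.cases_tail hxy with rfl | ⟨y', hxy', t, ht, rfl, hlt⟩
  · exact .refl
  rcases cs.length_mul_simple y' i with hup' | hdown'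
  · refine Relation.ReflTransGen.tail ((ih y' hlt).1 x i hxy' (by omega))
      ⟨cs.simple i * t * cs.simple i, ?_, ?_, by omega⟩
    · simpa [cs.inv_simple] using ht.conj (cs.simple i)
    · simp [mul_assoc, cs.simple_mul_simple_cancel_left]
  · exact ((ih y' hlt).2 x i hxy' (by omega)).trans <| (chainLE_mul_of_length_lt ht hlt).trans <|
      chainLE_mul_of_length_lt (cs.isReflection_simple i) hup

/-- `y` is a subword of a reduced word `r ++ [i]` for `y * t`; it cannot use the last letter, since
`ℓ (y * s i) > ℓ y`, so `y ≤ y * t * s i` and lifting by `s i` gives the claim. -/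
theorem chainLE_mul_simple_of_forall_length_lt {y t : W} {i : B}
    (ih : ∀ y', cs.length y' < cs.length (y * t) → cs.LiftsUp y') (ht : cs.IsReflection t)
    (hlt : cs.length y < cs.length (y * t)) (hup : cs.length y < cs.length (y * cs.simple i))
    (hdown : cs.length (y * t * cs.simple i) < cs.length (y * t)) :
    cs.ChainLE (y * cs.simple i) (y * t) := by
  obtain ⟨r, hr, hπr⟩ := cs.exists_isReduced (y * t * cs.simple i)
  have hπ : cs.wordProd (r ++ [i]) = y * t := by
    rw [wordProd_append, ← hπr, wordProd_singleton, simple_mul_simple_cancel_right]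
  obtain ⟨ω, hsub, hω, hπω⟩ :=
    cs.exists_isReduced_sublist_wordProd_eq_of_length_lt_mul ht hlt hπ
  rcases List.sublist_append_singleton_iff_s14.mp hsub with hsubr | ⟨κ, rfl, -⟩
  · have hle : cs.ChainLE y (y * t * cs.simple i) := by
      rw [hπr, ← hπω]
      exact cs.chainLE_wordProd_of_sublist_of_liftsUp hr
        (fun z hz => ih z (by rw [← hr.eq, ← hπr] at hz; omega)) hsubr hω
    simpa [simple_mul_simple_cancel_right] using
      ih _ hdown y i hle (by rwa [simple_mul_simple_cancel_right])
  · have hlen := hω.eq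
    rw [wordProd_append, wordProd_singleton, List.length_append, List.length_singleton] at hlen
    rw [wordProd_append, wordProd_singleton] at hπω
    subst hπω
    rw [simple_mul_simple_cancel_right] at hup
    have := cs.length_wordProd_le κ
    omega

theorem liftsDown_of_forall_length_lt {y : W}
    (ih : ∀ y', cs.length y' < cs.length y → cs.LiftsUp y' ∧ cs.LiftsDown y') :
    cs.LiftsDown y := by
  intro x i hxy hdown
  rcases Relation.ReflTransGen.cases_tail hxy with rfl | ⟨y', hxy', t, ht, rfl, hlt⟩
  · simpa [simple_mul_simple_cancel_right] using chainLE_mul_of_length_lt (x := y * cs.simple i)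
      (cs.isReflection_simple i) (by rwa [simple_mul_simple_cancel_right])
  rcases cs.length_mul_simple y' i with hup' | hdown'
  · exact ((ih y' hlt).1 x i hxy' (by omega)).trans <|
      cs.chainLE_mul_simple_of_forall_length_lt (fun z hz => (ih z hz).1) ht hlt (by omega) hdown
  · exact ((ih y' hlt).2 x i hxy' (by omega)).tail ⟨t, ht, rfl, hlt⟩

theorem liftsUp_and_liftsDown (y : W) : cs.LiftsUp y ∧ cs.LiftsDown y := by
  induction h : cs.length y using Nat.strong_induction_on generalizing y with
  | _ n ih =>
    have ih' : ∀ y', cs.length y' < cs.length y → cs.LiftsUp y' ∧ cs.LiftsDown y' :=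
      fun y' hy' => ih _ (h ▸ hy') y' rfl
    exact ⟨cs.liftsUp_of_forall_length_lt ih', cs.liftsDown_of_forall_length_lt ih'⟩

theorem chainLE_wordProd_of_sublist {ω ω' : List B} (hω : cs.IsReduced ω)
    (hsub : ω'.Sublist ω) (hω' : cs.IsReduced ω') :
    cs.ChainLE (cs.wordProd ω') (cs.wordProd ω) :=
  cs.chainLE_wordProd_of_sublist_of_liftsUp hω (fun y _ => (cs.liftsUp_and_liftsDown y).1) hsub hω'

theorem chainLE_of_bruhatLE {u v : W} (h : BruhatLE cs u v) : cs.ChainLE u v := by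
  obtain ⟨ω, hω, ω', hsub, hω'⟩ := h
  rw [← hω.1, ← hω'.1]
  exact cs.chainLE_wordProd_of_sublist (hω.isReduced) hsub
    (hω'.isReduced)

theorem chainLE_demStep {x y : W} (h : cs.ChainLE x y) (i : B) :
    cs.ChainLE (x * cs.simple i) (demStep cs y i) := by
  unfold demStep
  split_ifs with hup
  · exact (cs.liftsUp_and_liftsDown y).1 x i h hup
  · have := cs.length_mul_simple_ne y i
    exact (cs.liftsUp_and_liftsDown y).2 x i h (by omega)

theorem chainLE_foldl_demStep (ω : List B) {x y : W} (h : cs.ChainLE x y) :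
    cs.ChainLE (x * cs.wordProd ω) (ω.foldl (demStep cs) y) := by
  induction ω generalizing x y with
  | nil => simpa using h
  | cons i ω ih =>
    rw [wordProd_cons, ← mul_assoc, List.foldl_cons]
    exact ih (cs.chainLE_demStep h i)

theorem dem_eq_wordProd {ω : List B} (hω : cs.IsReduced ω) : dem cs ω = cs.wordProd ω := by
  induction ω using List.reverseRecOn with
  | nil => rfl
  | append_singleton ω i ih =>
    rw [dem, List.foldl_append, ← dem, ih (by simpa using hω.take ω.length), List.foldl_cons,
      List.foldl_nil, demStep, if_pos (cs.length_lt_length_mul_simple_of_isReduced_append hω),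
      wordProd_append, wordProd_singleton]

end

end CoxeterSystem

/-- If `u ≤ v` in Bruhat order, `R` is a reduced word for `v`, and `S` is a reduced word
for `u⁻¹w₀` (where `w₀` is the longest element), then `Dem(R ++ S) = w₀`. -/
theorem demazure_concat_eq_longest (cs : CoxeterSystem M W)
    (w₀ : W) (hw₀ : ∀ x : W, cs.length x ≤ cs.length w₀)
    (u v : W) (huv : BruhatLE cs u v)
    (R S : List B) (hR : IsRWordFor cs R v) (hS : IsRWordFor cs S (u⁻¹ * w₀)) :
    dem cs (R ++ S) = w₀ := by
  have hdem : dem cs (R ++ S) = S.foldl (demStep cs) v := by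
    rw [dem, List.foldl_append, ← dem, cs.dem_eq_wordProd (hR.isReduced), hR.1]
  have hchain := cs.chainLE_foldl_demStep S (cs.chainLE_of_bruhatLE huv)
  rw [← hdem, hS.1, mul_inv_cancel_left] at hchain
  exact (hchain.eq_of_length_le (hw₀ _)).symm
end
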